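/- arXiv:2407.06288 — 2 statements merged into one kernel-verified Lean document; each statement's English description precedes it below -/
import Mathlib

section
/- For any tax rate τ ∈ [0,1], the function P_τ(x,y) = ((1-τ)x + y) / ((y - x - 1)τ + 2) defined on [0,1] × [0,1] is monotone non-decreasing in both arguments. -/
noncomputable def P (τ x y : ℝ) : ℝ := ((1 - τ) * x + y) / ((y - x - 1) * τ + 2)

theorem P_monotone (τ : ℝ) (hτ : τ ∈ Set.Icc (0 : ℝ) 1) :
    (∀ x x' y : ℝ, x ∈ Set.Icc (0 : ℝ) 1 → x' ∈ Set.Icc (0 : ℝ) 1 →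
      y ∈ Set.Icc (0 : ℝ) 1 →
      0 < (y - x - 1) * τ + 2 → 0 < (y - x' - 1) * τ + 2 →
      x ≤ x' → P τ x y ≤ P τ x' y) ∧
    (∀ x y y' : ℝ, x ∈ Set.Icc (0 : ℝ) 1 → y ∈ Set.Icc (0 : ℝ) 1 →
      y' ∈ Set.Icc (0 : ℝ) 1 →
      0 < (y - x - 1) * τ + 2 → 0 < (y' - x - 1) * τ + 2 →
      y ≤ y' → P τ x y ≤ P τ x y') := by
  obtain ⟨hτ0, hτ1⟩ := hτ
  constructor
  · rintro x x' y ⟨hx0, hx1⟩ ⟨hx'0, hx'1⟩ ⟨hy0, hy1⟩ hd1 hd2 hxx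
    rw [P, P, div_le_div_iff₀ hd1 hd2]
    nlinarith [mul_nonneg (sub_nonneg.2 hxx) (sub_nonneg.2 hτ1),
      mul_nonneg (mul_nonneg (sub_nonneg.2 hxx) hτ0) hτ0,
      mul_nonneg (mul_nonneg (sub_nonneg.2 hxx) (sub_nonneg.2 hτ1)) hy0,
      mul_nonneg (mul_nonneg (sub_nonneg.2 hxx) hτ0) (sub_nonneg.2 hy1)]
  · rintro x y y' ⟨hx0, hx1⟩ ⟨hy0, hy1⟩ ⟨hy'0, hy'1⟩ hd1 hd2 hyy
    rw [P, P, div_le_div_iff₀ hd1 hd2]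
    nlinarith [mul_nonneg (sub_nonneg.2 hyy) (sub_nonneg.2 hτ1),
      mul_nonneg (mul_nonneg (sub_nonneg.2 hyy) hτ0) hτ0,
      mul_nonneg (mul_nonneg (sub_nonneg.2 hyy) hτ0) (sub_nonneg.2 hx1),
      mul_nonneg (mul_nonneg (sub_nonneg.2 hyy) (sub_nonneg.2 hτ1)) hx0]
end

section
/- Taxman-winning bid invariant: let τ ∈ [0,1], let x⁻ ≤ x⁺ be reals in [0,1], let R₁, R₂ ≥ 0, set D = (x⁺ − x⁻ − 1)τ + 2, x = ((1−τ)x⁻ + x⁺)/D · (1 + R₁ + R₂) − R₁, and b = (x⁺ − x⁻)/D. If 1 ≥ B > max(0, x), then ((B + R₁)/(1 + R₁ + R₂) − b)/(1 − τ b) > x⁻ and ((B + R₁)/(1 + R₁ + R₂) + (1−τ)b)/(1 − τ b) > x⁺. -/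
theorem taxman_bid_invariant
    (τ xm xp R₁ R₂ B : ℝ) (hτ : τ ∈ Set.Icc (0 : ℝ) 1)
    (hxm : xm ∈ Set.Icc (0 : ℝ) 1) (hxp : xp ∈ Set.Icc (0 : ℝ) 1)
    (hle : xm ≤ xp) (hR₁ : 0 ≤ R₁) (hR₂ : 0 ≤ R₂)
    (hB : max 0 ((((1 - τ) * xm + xp) / ((xp - xm - 1) * τ + 2)) * (1 + R₁ + R₂) - R₁) < B)
    (hB1 : B ≤ 1) :
    ((B + R₁) / (1 + R₁ + R₂) - (xp - xm) / ((xp - xm - 1) * τ + 2)) /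
        (1 - τ * ((xp - xm) / ((xp - xm - 1) * τ + 2))) > xm ∧
    ((B + R₁) / (1 + R₁ + R₂) + (1 - τ) * ((xp - xm) / ((xp - xm - 1) * τ + 2))) /
        (1 - τ * ((xp - xm) / ((xp - xm - 1) * τ + 2))) > xp := by
  obtain ⟨hτ0, hτ1⟩ := hτ
  obtain ⟨hxm0, hxm1⟩ := hxm
  obtain ⟨hxp0, hxp1⟩ := hxp
  set D : ℝ := (xp - xm - 1) * τ + 2 with hDdef
  have hD1 : (1:ℝ) ≤ D := by
    have : (xp - xm - 1) * τ ≥ -1 := by nlinarith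
    simp only [hDdef]; linarith
  have hD0 : (0:ℝ) < D := by linarith
  have hS : (0:ℝ) < 1 + R₁ + R₂ := by linarith
  set b : ℝ := (xp - xm) / D with hbdef
  have hb : 1 - τ * b = (2 - τ) / D := by
    rw [hbdef]; field_simp
    simp only [hDdef]; ring
  have hpos : 0 < 1 - τ * b := by
    rw [hb]
    apply div_pos (by linarith) hD0
  have hBlt := (max_lt_iff.mp hB).2
  have key : (((1 - τ) * xm + xp) / D) < (B + R₁) / (1 + R₁ + R₂) := by
    rw [lt_div_iff₀ hS]
    linarith
  constructor
  · rw [gt_iff_lt, lt_div_iff₀ hpos]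
    have h1 : xm * (1 - τ * b) + b = ((1 - τ) * xm + xp) / D := by
      rw [hb, hbdef]
      field_simp
      ring
    linarith
  · rw [gt_iff_lt, lt_div_iff₀ hpos]
    have h2 : xp * (1 - τ * b) - (1 - τ) * b = ((1 - τ) * xm + xp) / D := by
      rw [hb, hbdef]
      field_simp
      ring
    linarith
end
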